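/- arXiv:2405.12762 — 6 statements merged into one kernel-verified Lean document; each statement's English description precedes it below -/
import Mathlib

section
/- Let (xᵏ, zᵏ, sᵏ, τᵏ, κᵏ), k = 0, 1, 2, …, be a bounded sequence with τᵏ > 0 for all k, such that the residuals Pxᵏ + Aᵀzᵏ + qτᵏ → 0, Axᵏ + sᵏ − bτᵏ → 0 and κᵏ + qᵀxᵏ + bᵀzᵏ + (1/τᵏ)(xᵏ)ᵀPxᵏ → 0 as k → ∞. Then ⟨sᵏ, zᵏ⟩ + τᵏκᵏ → 0; that is, every bounded asymptotically feasible sequence for the homogeneous embedding is asymptotically complementary. -/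
open Matrix

lemma dot_bound {n : ℕ} (v w : Fin n → ℝ) : |v ⬝ᵥ w| ≤ n * ‖v‖ * ‖w‖ := by
  have h : ∀ i, |v i * w i| ≤ ‖v‖ * ‖w‖ := by
    intro i
    rw [abs_mul]
    exact mul_le_mul (norm_le_pi_norm v i) (norm_le_pi_norm w i) (abs_nonneg _)
      (norm_nonneg _)
  calc |v ⬝ᵥ w| ≤ ∑ i, |v i * w i| := Finset.abs_sum_le_sum_abs _ _
    _ ≤ ∑ _i : Fin n, ‖v‖ * ‖w‖ := Finset.sum_le_sum fun i _ => h i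
    _ = n * ‖v‖ * ‖w‖ := by simp [mul_assoc]

/-- every bounded asymptotically feasible sequence is asymptotically
complementary. -/
theorem stmt3 {n m : ℕ} (P : Matrix (Fin n) (Fin n) ℝ) (A : Matrix (Fin m) (Fin n) ℝ)
    (q : Fin n → ℝ) (b : Fin m → ℝ) (hP : P.IsSymm)
    (x : ℕ → Fin n → ℝ) (z s : ℕ → Fin m → ℝ) (τ κ : ℕ → ℝ)
    (hτ : ∀ k, 0 < τ k)
    (hbound : ∃ C : ℝ, ∀ k, ‖x k‖ ≤ C ∧ ‖z k‖ ≤ C ∧ ‖s k‖ ≤ C ∧ |τ k| ≤ C ∧ |κ k| ≤ C)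
    (hres1 : Filter.Tendsto (fun k => P.mulVec (x k) + Aᵀ.mulVec (z k) + τ k • q)
      Filter.atTop (nhds 0))
    (hres2 : Filter.Tendsto (fun k => A.mulVec (x k) + s k - τ k • b)
      Filter.atTop (nhds 0))
    (hres3 : Filter.Tendsto
      (fun k => κ k + q ⬝ᵥ x k + b ⬝ᵥ z k + (1 / τ k) * (x k ⬝ᵥ P.mulVec (x k)))
      Filter.atTop (nhds 0)) :
    Filter.Tendsto (fun k => s k ⬝ᵥ z k + τ k * κ k) Filter.atTop (nhds 0) := by
  obtain ⟨C, hC⟩ := hbound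
  set r1 : ℕ → Fin n → ℝ := fun k => P.mulVec (x k) + Aᵀ.mulVec (z k) + τ k • q with hr1
  set r2 : ℕ → Fin m → ℝ := fun k => A.mulVec (x k) + s k - τ k • b with hr2
  set r3 : ℕ → ℝ := fun k =>
    κ k + q ⬝ᵥ x k + b ⬝ᵥ z k + (1 / τ k) * (x k ⬝ᵥ P.mulVec (x k)) with hr3
  have key : ∀ k, s k ⬝ᵥ z k + τ k * κ k
      = τ k * r3 k - x k ⬝ᵥ r1 k + z k ⬝ᵥ r2 k := by
    intro k
    have hτk : τ k ≠ 0 := (hτ k).ne'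
    simp only [hr1, hr2, hr3, dotProduct_add, dotProduct_sub, dotProduct_smul,
      smul_eq_mul]
    have h1 : x k ⬝ᵥ Aᵀ.mulVec (z k) = z k ⬝ᵥ A.mulVec (x k) := by
      rw [dotProduct_mulVec, vecMul_transpose, dotProduct_comm]
    have h2 : q ⬝ᵥ x k = x k ⬝ᵥ q := dotProduct_comm _ _
    have h3 : b ⬝ᵥ z k = z k ⬝ᵥ b := dotProduct_comm _ _
    have h4 : s k ⬝ᵥ z k = z k ⬝ᵥ s k := dotProduct_comm _ _
    rw [h1, h2, h3, h4]
    field_simp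
    ring
  have hn1 : Filter.Tendsto (fun k => ‖r1 k‖) Filter.atTop (nhds 0) := by
    simpa using hres1.norm
  have hn2 : Filter.Tendsto (fun k => ‖r2 k‖) Filter.atTop (nhds 0) := by
    simpa using hres2.norm
  have hn3 : Filter.Tendsto (fun k => ‖r3 k‖) Filter.atTop (nhds 0) := by
    simpa using hres3.norm
  have t1 : Filter.Tendsto (fun k => τ k * r3 k) Filter.atTop (nhds 0) := by
    refine squeeze_zero_norm (a := fun k => C * ‖r3 k‖) (fun k => ?_) ?_
    · rw [Real.norm_eq_abs, abs_mul]
      exact mul_le_mul_of_nonneg_right (hC k).2.2.2.1 (abs_nonneg _)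
    · simpa using hn3.const_mul C
  have t2 : Filter.Tendsto (fun k => x k ⬝ᵥ r1 k) Filter.atTop (nhds 0) := by
    refine squeeze_zero_norm (a := fun k => n * C * ‖r1 k‖) (fun k => ?_) ?_
    · refine le_trans (dot_bound _ _) ?_
      exact mul_le_mul_of_nonneg_right
        (mul_le_mul_of_nonneg_left (hC k).1 (Nat.cast_nonneg _)) (norm_nonneg _)
    · simpa using hn1.const_mul ((n : ℝ) * C)
  have t3 : Filter.Tendsto (fun k => z k ⬝ᵥ r2 k) Filter.atTop (nhds 0) := by
    refine squeeze_zero_norm (a := fun k => m * C * ‖r2 k‖) (fun k => ?_) ?_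
    · refine le_trans (dot_bound _ _) ?_
      exact mul_le_mul_of_nonneg_right
        (mul_le_mul_of_nonneg_left (hC k).2.1 (Nat.cast_nonneg _)) (norm_nonneg _)
    · simpa using hn2.const_mul ((m : ℝ) * C)
  have hconv : Filter.Tendsto
      (fun k => τ k * r3 k - x k ⬝ᵥ r1 k + z k ⬝ᵥ r2 k) Filter.atTop (nhds 0) := by
    simpa using (t1.sub t2).add t3
  exact (Filter.tendsto_congr key).mpr hconv
end

section
/- Suppose (x, z, s, τ, κ) satisfies τ > 0, κ ≥ 0, s ∈ K, z ∈ K*, the homogeneous equations Px + Aᵀz + qτ = 0, Ax + s − bτ = 0, κ + qᵀx + bᵀz + (1/τ)xᵀPx = 0, and the complementarity condition ⟨s, z⟩ + τκ = 0. Then κ = 0 and ⟨s, z⟩ = 0, the rescaled point (x̄, s̄, z̄) := (x/τ, s/τ, z/τ) satisfies Ax̄ + s̄ = b, s̄ ∈ K, Px̄ + Aᵀz̄ = −q, z̄ ∈ K*, and ⟨s̄, z̄⟩ = 0; moreover (x̄, s̄) is optimal for the primal problem: for every (x′, s′) with Ax′ + s′ = b and s′ ∈ K one has ½x′ᵀPx′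 + qᵀx′ ≥ ½x̄ᵀPx̄ + qᵀx̄. -/
/-!
Complementarity `⟨s, z⟩ + τκ = 0` is a sum of two nonnegative terms, so both vanish. Dividing the
homogeneous equations by `τ` gives a point satisfying the KKT conditions of the conic QP, and the
KKT conditions are sufficient: for a feasible `x' = x̄ + d` the objective grows by
`½ dᵀPd + (Px̄ + q)ᵀd = ½ dᵀPd + ⟨z̄, s'⟩ ≥ 0`, since `Px̄ + q = -Aᵀz̄`, `Ad = s̄ - s'` and `⟨s̄, z̄⟩ = 0`.
-/

open Matrix

variable {ι ι' : Type*} [Fintype ι] [Fintype ι']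

def dualCone (K : Set (ι' → ℝ)) : Set (ι' → ℝ) := {z | ∀ s ∈ K, 0 ≤ z ⬝ᵥ s}

lemma smul_mem_dualCone {K : Set (ι' → ℝ)} {z : ι' → ℝ} {c : ℝ} (hc : 0 ≤ c)
    (hz : z ∈ dualCone K) : c • z ∈ dualCone K := fun s hs => by
  rw [smul_dotProduct]
  exact smul_nonneg hc (hz s hs)

noncomputable def qpObjective (P : Matrix ι ι ℝ) (q x : ι → ℝ) : ℝ :=
  1 / 2 * (x ⬝ᵥ P *ᵥ x) + q ⬝ᵥ x

lemma qpObjective_add {P : Matrix ι ι ℝ} (hP : P.IsSymm) (q x d : ι → ℝ) :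
    qpObjective P q (x + d)
      = qpObjective P q x + (P *ᵥ x + q) ⬝ᵥ d + 1 / 2 * (d ⬝ᵥ P *ᵥ d) := by
  have hswap : x ⬝ᵥ P *ᵥ d = d ⬝ᵥ P *ᵥ x := by
    simpa only [hP.eq] using (dotProduct_transpose_mulVec P d x).symm
  simp only [qpObjective, mulVec_add, dotProduct_add, add_dotProduct, hswap,
    dotProduct_comm (P *ᵥ x) d, dotProduct_comm q d]
  ring

theorem qpObjective_le_of_kkt {P : Matrix ι ι ℝ} {A : Matrix ι' ι ℝ} {q x x' : ι → ℝ}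
    {b s s' z : ι' → ℝ} {K : Set (ι' → ℝ)} (hP : P.PosSemidef) (hz : z ∈ dualCone K)
    (hfeas : A *ᵥ x + s = b) (hstat : P *ᵥ x + Aᵀ *ᵥ z = -q) (hcomp : s ⬝ᵥ z = 0)
    (hs' : s' ∈ K) (hfeas' : A *ᵥ x' + s' = b) :
    qpObjective P q x ≤ qpObjective P q x' := by
  set d := x' - x
  have hgrad : P *ᵥ x + q = -(Aᵀ *ᵥ z) := by rw [← neg_neg q, ← hstat]; abel
  have hAd : A *ᵥ d = s - s' := by
    rw [mulVec_sub, eq_sub_of_add_eq hfeas, eq_sub_of_add_eq hfeas']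
    abel
  have hlin : (P *ᵥ x + q) ⬝ᵥ d = z ⬝ᵥ s' := by
    rw [hgrad, neg_dotProduct, dotProduct_comm, dotProduct_transpose_mulVec, hAd,
      dotProduct_sub, dotProduct_comm z s, hcomp]
    ring
  have hcurv : 0 ≤ d ⬝ᵥ P *ᵥ d := by simpa using hP.dotProduct_mulVec_nonneg d
  have hx' : x' = x + d := by simp only [d, add_sub_cancel]
  rw [hx', qpObjective_add (isHermitian_iff_isSymm.mp hP.isHermitian), hlin]
  linarith [hz s' hs']

theorem stmt4_general {n m : ℕ} (P : Matrix (Fin n) (Fin n) ℝ) (A : Matrix (Fin m) (Fin n) ℝ)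
    (q : Fin n → ℝ) (b : Fin m → ℝ) (K : Set (Fin m → ℝ))
    (hP : P.PosSemidef)
    (hKcone : ∀ c : ℝ, 0 < c → ∀ v ∈ K, c • v ∈ K)
    (x : Fin n → ℝ) (z s : Fin m → ℝ) (τ κ : ℝ)
    (hτ : 0 < τ) (hκ : 0 ≤ κ) (hs : s ∈ K)
    (hz : z ∈ {z' : Fin m → ℝ | ∀ s' ∈ K, 0 ≤ z' ⬝ᵥ s'})
    (heq1 : P.mulVec x + Aᵀ.mulVec z + τ • q = 0)
    (heq2 : A.mulVec x + s - τ • b = 0)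
    (hcomp : s ⬝ᵥ z + τ * κ = 0) :
    κ = 0 ∧ s ⬝ᵥ z = 0
    ∧ A.mulVec (τ⁻¹ • x) + τ⁻¹ • s = b
    ∧ τ⁻¹ • s ∈ K
    ∧ P.mulVec (τ⁻¹ • x) + Aᵀ.mulVec (τ⁻¹ • z) = -q
    ∧ τ⁻¹ • z ∈ {z' : Fin m → ℝ | ∀ s' ∈ K, 0 ≤ z' ⬝ᵥ s'}
    ∧ (τ⁻¹ • s) ⬝ᵥ (τ⁻¹ • z) = 0
    ∧ ∀ x' : Fin n → ℝ, ∀ s' ∈ K, A.mulVec x' + s' = b →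
        (1/2) * (x' ⬝ᵥ P.mulVec x') + q ⬝ᵥ x'
          ≥ (1/2) * ((τ⁻¹ • x) ⬝ᵥ P.mulVec (τ⁻¹ • x)) + q ⬝ᵥ (τ⁻¹ • x) := by
  obtain ⟨hsz, hτκ⟩ :=
    (add_eq_zero_iff_of_nonneg (dotProduct_comm z s ▸ hz s hs) (mul_nonneg hτ.le hκ)).mp hcomp
  have hfeas : A *ᵥ (τ⁻¹ • x) + τ⁻¹ • s = b := by
    rw [mulVec_smul, ← smul_add, sub_eq_zero.mp heq2, inv_smul_smul₀ hτ.ne']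
  have hstat : P *ᵥ (τ⁻¹ • x) + Aᵀ *ᵥ (τ⁻¹ • z) = -q := by
    rw [mulVec_smul, mulVec_smul, ← smul_add, eq_neg_of_add_eq_zero_left heq1, smul_neg,
      inv_smul_smul₀ hτ.ne']
  have hzbar : τ⁻¹ • z ∈ dualCone K := smul_mem_dualCone (inv_nonneg.mpr hτ.le) hz
  have hcompbar : (τ⁻¹ • s) ⬝ᵥ (τ⁻¹ • z) = 0 := by
    rw [smul_dotProduct, dotProduct_smul, hsz, smul_zero, smul_zero]
  exact ⟨(mul_eq_zero.mp hτκ).resolve_left hτ.ne', hsz, hfeas,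
    hKcone τ⁻¹ (inv_pos.mpr hτ) s hs, hstat, hzbar, hcompbar,
    fun x' s' hs' hfeas' => qpObjective_le_of_kkt hP hzbar hfeas hstat hcompbar hs' hfeas'⟩

/-- a complementary solution of the homogeneous embedding with `τ > 0`
yields a primal-dual optimal solution after rescaling. -/
theorem stmt4 {n m : ℕ} (P : Matrix (Fin n) (Fin n) ℝ) (A : Matrix (Fin m) (Fin n) ℝ)
    (q : Fin n → ℝ) (b : Fin m → ℝ) (K : Set (Fin m → ℝ))
    (hP : P.PosSemidef) (hKclosed : IsClosed K) (hKconv : Convex ℝ K)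
    (hKcone : ∀ c : ℝ, 0 < c → ∀ v ∈ K, c • v ∈ K)
    (x : Fin n → ℝ) (z s : Fin m → ℝ) (τ κ : ℝ)
    (hτ : 0 < τ) (hκ : 0 ≤ κ) (hs : s ∈ K)
    (hz : z ∈ {z' : Fin m → ℝ | ∀ s' ∈ K, 0 ≤ z' ⬝ᵥ s'})
    (heq1 : P.mulVec x + Aᵀ.mulVec z + τ • q = 0)
    (heq2 : A.mulVec x + s - τ • b = 0)
    (heq3 : κ + q ⬝ᵥ x + b ⬝ᵥ z + (1/τ) * (x ⬝ᵥ P.mulVec x) = 0)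
    (hcomp : s ⬝ᵥ z + τ * κ = 0) :
    κ = 0 ∧ s ⬝ᵥ z = 0
    ∧ A.mulVec (τ⁻¹ • x) + τ⁻¹ • s = b
    ∧ τ⁻¹ • s ∈ K
    ∧ P.mulVec (τ⁻¹ • x) + Aᵀ.mulVec (τ⁻¹ • z) = -q
    ∧ τ⁻¹ • z ∈ {z' : Fin m → ℝ | ∀ s' ∈ K, 0 ≤ z' ⬝ᵥ s'}
    ∧ (τ⁻¹ • s) ⬝ᵥ (τ⁻¹ • z) = 0
    ∧ ∀ x' : Fin n → ℝ, ∀ s' ∈ K, A.mulVec x' + s' = b →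
        (1/2) * (x' ⬝ᵥ P.mulVec x') + q ⬝ᵥ x'
          ≥ (1/2) * ((τ⁻¹ • x) ⬝ᵥ P.mulVec (τ⁻¹ • x)) + q ⬝ᵥ (τ⁻¹ • x) :=
  stmt4_general P A q b K hP hKcone x z s τ κ hτ hκ hs hz heq1 heq2 hcomp
end

section
/- Let P ∈ ℝⁿˣⁿ be symmetric. Suppose there exist x̄ ∈ ℝⁿ and s̄ ∈ K with Px̄ = 0, Ax̄ + s̄ = 0 and ⟨q, x̄⟩ < 0. Then the dual problem is infeasible: there is no pair (x, z) ∈ ℝⁿ × ℝᵐ with Px + Aᵀz = −q and z ∈ K*. -/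
open Matrix

/-- a primal-cone certificate proves dual infeasibility. -/
theorem stmt7 {n m : ℕ} (P : Matrix (Fin n) (Fin n) ℝ) (A : Matrix (Fin m) (Fin n) ℝ)
    (q : Fin n → ℝ) (K : Set (Fin m → ℝ)) (hP : P.IsSymm)
    (hKclosed : IsClosed K) (hKconv : Convex ℝ K)
    (hKcone : ∀ c : ℝ, 0 < c → ∀ v ∈ K, c • v ∈ K)
    (xbar : Fin n → ℝ) (sbar : Fin m → ℝ) (hsbar : sbar ∈ K)
    (hPx : P.mulVec xbar = 0)
    (hAx : A.mulVec xbar + sbar = 0)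
    (hqx : q ⬝ᵥ xbar < 0) :
    ¬ ∃ (x : Fin n → ℝ) (z : Fin m → ℝ),
        P.mulVec x + Aᵀ.mulVec z = -q ∧ z ∈ {z' : Fin m → ℝ | ∀ s ∈ K, 0 ≤ z' ⬝ᵥ s} := by
  rintro ⟨x, z, heq, hz⟩
  have hAxbar : A.mulVec xbar = -sbar := by
    rw [eq_neg_iff_add_eq_zero]; exact hAx
  have h1 : P.mulVec x ⬝ᵥ xbar = 0 := by
    rw [dotProduct_comm, dotProduct_mulVec, ← mulVec_transpose, hP.eq, hPx, zero_dotProduct]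
  have h2 : Aᵀ.mulVec z ⬝ᵥ xbar = -(z ⬝ᵥ sbar) := by
    rw [mulVec_transpose, ← dotProduct_mulVec, hAxbar, dotProduct_neg]
  have h3 : 0 ≤ z ⬝ᵥ sbar := hz sbar hsbar
  have h4 := congrArg (· ⬝ᵥ xbar) heq
  simp only [add_dotProduct, neg_dotProduct, h1, h2] at h4
  rw [dotProduct_comm] at h4
  linarith [dotProduct_comm sbar z]
end

section
/- Let s = (s₁, s₂, s₃) ∈ ℝ³ satisfy s₂ > 0 and s₂·e^{s₁/s₂} ≤ s₃ (i.e. s lies in the exponential cone), and let z = (z₁, z₂, z₃) ∈ ℝ³ satisfy z₁ < 0, z₃ > 0 and −z₁·e^{z₂/z₁ − 1} ≤ z₃ (i.e. z lies in the dual exponential cone). Then ⟨s, z⟩ = s₁z₁ + s₂z₂ + s₃z₃ ≥ 0. -/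
/-- the exponential cone and its dual cone pair nonnegatively. -/
theorem stmt10 (s₁ s₂ s₃ z₁ z₂ z₃ : ℝ)
    (hs₂ : 0 < s₂) (hs : s₂ * Real.exp (s₁ / s₂) ≤ s₃)
    (hz₁ : z₁ < 0) (hz₃ : 0 < z₃) (hz : -z₁ * Real.exp (z₂ / z₁ - 1) ≤ z₃) :
    0 ≤ s₁ * z₁ + s₂ * z₂ + s₃ * z₃ := by
  have key : s₂ * (-z₁) * Real.exp (s₁ / s₂ + (z₂ / z₁ - 1)) ≥
      s₂ * (-z₁) * (s₁ / s₂ + (z₂ / z₁ - 1) + 1) := by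
    have h := Real.add_one_le_exp (s₁ / s₂ + (z₂ / z₁ - 1))
    have hpos : 0 < s₂ * (-z₁) := mul_pos hs₂ (by linarith)
    nlinarith
  have hexp : Real.exp (s₁ / s₂ + (z₂ / z₁ - 1)) =
      Real.exp (s₁ / s₂) * Real.exp (z₂ / z₁ - 1) := Real.exp_add _ _
  have h1 : s₂ * (-z₁) * (s₁ / s₂ + (z₂ / z₁ - 1) + 1) = -(s₁ * z₁) - s₂ * z₂ := by
    have hz₁' : z₁ ≠ 0 := ne_of_lt hz₁
    field_simp
    ring
  have h2 : s₃ * z₃ ≥ s₂ * Real.exp (s₁ / s₂) * (-z₁ * Real.exp (z₂ / z₁ - 1)) := by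
    have e1 : 0 < s₂ * Real.exp (s₁ / s₂) := mul_pos hs₂ (Real.exp_pos _)
    have e2 : 0 < -z₁ * Real.exp (z₂ / z₁ - 1) := mul_pos (by linarith) (Real.exp_pos _)
    nlinarith
  rw [hexp] at key
  have heq : s₂ * -z₁ * (Real.exp (s₁ / s₂) * Real.exp (z₂ / z₁ - 1)) =
      s₂ * Real.exp (s₁ / s₂) * (-z₁ * Real.exp (z₂ / z₁ - 1)) := by ring
  linarith [key, h2, heq.le, heq.ge]
end

section
/- Fix M > 0 and w ∈ ℝ, and define the Huber loss φ(w) = w² if |w| ≤ M and φ(w) = M·(2|w| − M) if |w| > M. Then φ(w) equals the minimum of u² + 2M·(r + s) over all (u, r, s) ∈ ℝ × ℝ × ℝ with r ≥ 0, s ≥ 0 and w = u + r − s, and this minimum is attained. -/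
/-- variational (QP) representation of the Huber loss. -/
theorem stmt18 (M : ℝ) (hM : 0 < M) (w : ℝ) :
    IsLeast
      {v : ℝ | ∃ u r s : ℝ, 0 ≤ r ∧ 0 ≤ s ∧ w = u + r - s ∧ v = u^2 + 2*M*(r + s)}
      (if |w| ≤ M then w^2 else M * (2*|w| - M)) := by
  constructor
  · by_cases h : |w| ≤ M
    · rw [if_pos h]
      exact ⟨w, 0, 0, le_refl 0, le_refl 0, by ring, by ring⟩
    · rw [if_neg h]
      push_neg at h
      rcases le_or_gt 0 w with hw | hw
      · refine ⟨M, w - M, 0, ?_, le_refl 0, by ring, ?_⟩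
        · rw [abs_of_nonneg hw] at h; linarith
        · rw [abs_of_nonneg hw]; ring
      · refine ⟨-M, 0, -M - w, le_refl 0, ?_, by ring, ?_⟩
        · rw [abs_of_neg hw] at h; linarith
        · rw [abs_of_neg hw]; ring
  · rintro v ⟨u, r, s, hr, hs, hw, hv⟩
    have hkey : |w - u| ≤ r + s := by
      rw [hw, abs_le]; constructor <;> linarith
    have h1 : w - u ≤ |w - u| := le_abs_self _
    have h2 : -(w - u) ≤ |w - u| := neg_le_abs _
    have h3 : u ≤ |u| := le_abs_self _
    have h4 : -u ≤ |u| := neg_le_abs _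
    have h5 : w ≤ |w| := le_abs_self _
    have h6 : -w ≤ |w| := neg_le_abs _
    have hsu : u ^ 2 = |u| ^ 2 := (sq_abs u).symm
    have hsw : w ^ 2 = |w| ^ 2 := (sq_abs w).symm
    have htri : |w| ≤ |w - u| + |u| := by
      calc |w| = |(w - u) + u| := by norm_num
        _ ≤ |w - u| + |u| := abs_add_le _ _
    by_cases h : |w| ≤ M
    · rw [if_pos h]
      rcases le_or_gt (|u|) M with hu | hu
      · nlinarith [abs_nonneg (w - u)]
      · nlinarith [abs_nonneg (w - u)]
    · rw [if_neg h]
      push_neg at h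
      nlinarith [sq_nonneg (|u| - M), abs_nonneg (w - u)]
end

section
/- Let P ∈ ℝⁿˣⁿ be symmetric, A ∈ ℝᵐˣⁿ, H ∈ ℝᵐˣᵐ, q, d_x, ξ ∈ ℝⁿ, b, δ ∈ ℝᵐ, and scalars τ > 0, κ, ρ ∈ ℝ. Suppose (Δx₁, Δz₁) and (Δx₂, Δz₂) satisfy the two linear systems PΔx₁ + AᵀΔz₁ = d_x, AΔx₁ − HΔz₁ = −δ and PΔx₂ + AᵀΔz₂ = −q, AΔx₂ − HΔz₂ = b, and that the denominator D := κ/τ + ξᵀPξ − (2Pξ + q)ᵀΔx₂ − bᵀΔz₂ is nonzero. Define Δτ := (ρ + (2Pξ + q)ᵀΔx₁ + bᵀΔz₁)/D, Δx := Δx₁ + Δτ·Δx₂ and Δz := Δz₁ + Δτ·Δz₂. Then (Δx, Δz, Δτ) solves the full reduced Newton system: PΔx + AᵀΔz + qΔτ = d_x, −AΔx + HΔz + bΔτ = δ, and −(q + 2Pξ)ᵀΔx − bᵀΔz + (ξᵀPξ + κ/τ)Δτ = ρ. -/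
open Matrix

/-- recovery of the solution of the 3×3 reduced Newton system from two
solves against the common 2×2 KKT matrix. -/
theorem stmt19 {n m : ℕ} (P : Matrix (Fin n) (Fin n) ℝ) (A : Matrix (Fin m) (Fin n) ℝ)
    (H : Matrix (Fin m) (Fin m) ℝ) (hP : P.IsSymm)
    (q dx ξ : Fin n → ℝ) (b δ : Fin m → ℝ) (τ κ ρ : ℝ) (hτ : 0 < τ)
    (Δx₁ Δx₂ : Fin n → ℝ) (Δz₁ Δz₂ : Fin m → ℝ)
    (h11 : P.mulVec Δx₁ + Aᵀ.mulVec Δz₁ = dx)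
    (h12 : A.mulVec Δx₁ - H.mulVec Δz₁ = -δ)
    (h21 : P.mulVec Δx₂ + Aᵀ.mulVec Δz₂ = -q)
    (h22 : A.mulVec Δx₂ - H.mulVec Δz₂ = b)
    (D : ℝ)
    (hD : D = κ / τ + ξ ⬝ᵥ P.mulVec ξ - ((2:ℝ) • P.mulVec ξ + q) ⬝ᵥ Δx₂ - b ⬝ᵥ Δz₂)
    (hDne : D ≠ 0)
    (Δτ : ℝ) (hΔτ : Δτ = (ρ + ((2:ℝ) • P.mulVec ξ + q) ⬝ᵥ Δx₁ + b ⬝ᵥ Δz₁) / D)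
    (Δx : Fin n → ℝ) (hΔx : Δx = Δx₁ + Δτ • Δx₂)
    (Δz : Fin m → ℝ) (hΔz : Δz = Δz₁ + Δτ • Δz₂) :
    P.mulVec Δx + Aᵀ.mulVec Δz + Δτ • q = dx
    ∧ -(A.mulVec Δx) + H.mulVec Δz + Δτ • b = δ
    ∧ -((q + (2:ℝ) • P.mulVec ξ) ⬝ᵥ Δx) - b ⬝ᵥ Δz + (ξ ⬝ᵥ P.mulVec ξ + κ / τ) * Δτ = ρ := by
  have hΔτD : Δτ * D = ρ + ((2:ℝ) • P.mulVec ξ + q) ⬝ᵥ Δx₁ + b ⬝ᵥ Δz₁ := by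
    rw [hΔτ]; field_simp
  subst hΔx hΔz
  refine ⟨?_, ?_, ?_⟩
  · have : P.mulVec (Δx₁ + Δτ • Δx₂) + Aᵀ.mulVec (Δz₁ + Δτ • Δz₂) + Δτ • q
        = (P.mulVec Δx₁ + Aᵀ.mulVec Δz₁) + Δτ • (P.mulVec Δx₂ + Aᵀ.mulVec Δz₂ + q) := by
      simp [mulVec_add, mulVec_smul, smul_add]
      abel
    rw [this, h11, h21]; simp
  · have : -(A.mulVec (Δx₁ + Δτ • Δx₂)) + H.mulVec (Δz₁ + Δτ • Δz₂) + Δτ • b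
        = -(A.mulVec Δx₁ - H.mulVec Δz₁) - Δτ • (A.mulVec Δx₂ - H.mulVec Δz₂ - b) := by
      simp [mulVec_add, mulVec_smul, smul_sub]
      abel
    rw [this, h12, h22]; simp
  · have e1 : (q + (2:ℝ) • P.mulVec ξ) ⬝ᵥ (Δx₁ + Δτ • Δx₂)
        = ((2:ℝ) • P.mulVec ξ + q) ⬝ᵥ Δx₁ + Δτ * (((2:ℝ) • P.mulVec ξ + q) ⬝ᵥ Δx₂) := by
      simp [dotProduct_add, dotProduct_smul, add_comm]
    have e2 : b ⬝ᵥ (Δz₁ + Δτ • Δz₂) = b ⬝ᵥ Δz₁ + Δτ * (b ⬝ᵥ Δz₂) := by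
      simp [dotProduct_add, dotProduct_smul]
    rw [e1, e2]
    have := hΔτD
    rw [hD] at this
    nlinarith [this]
end
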